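/- Let C := {f ∈ L¹[0,1] : f ≥ 0 a.e. and ∫₀¹ f = 1} and, for a ∈ [0,1], let C_a be the convex hull of C ∪ {a·𝟙}, where 𝟙 is the constant function 1. The sequence f_n := n·χ_{[0,1/n]} lies in C, converges to 0 Lebesgue-almost everywhere, satisfies limsup_n ‖f_n − 0‖₁ = 1, and for every h ∈ C_a, limsup_n ‖f_n − h‖₁ ≥ 1 + a. Consequently, the coefficient t(C_a) (the infimum of all λ ≥ 0 such that for every sequence (x_n) ⊆ C_a converging a.e. to some x ∈ L¹[0,1], inf_{c∈C_a} limsup_n ‖c − x_n‖₁ ≤ λ·limsup_n ‖x − x_n‖₁) satisfies t(C_a) ≥ 1 + a. -/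

import Mathlib

open MeasureTheory Filter Topology

/-- Lebesgue measure on `[0,1]`. -/
noncomputable def μ01 : Measure ℝ := volume.restrict (Set.Icc 0 1)

instance : IsFiniteMeasure μ01 := by
  constructor
  simp [μ01, Real.volume_Icc]

/-- The constant function `1` as an element of `L¹[0,1]`. -/
noncomputable def oneL1 : Lp ℝ 1 μ01 := (memLp_const (1 : ℝ)).toLp (fun _ => (1 : ℝ))

/-- `C = {f ∈ L¹[0,1] : f ≥ 0 a.e., ∫ f = 1}`. -/
noncomputable def posProbC : Set (Lp ℝ 1 μ01) :=
  {f | (∀ᵐ t ∂μ01, 0 ≤ f t) ∧ ∫ t, f t ∂μ01 = 1}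

/-- `f_n = n · χ_{[0,1/n]}` as an element of `L¹[0,1]`. -/
noncomputable def rect (n : ℕ) : Lp ℝ 1 μ01 :=
  indicatorConstLp 1 measurableSet_Icc (measure_ne_top μ01 (Set.Icc 0 (1 / (n : ℝ)))) (n : ℝ)

/-- The coefficient `t(C)` of a set `C ⊆ L¹[0,1]`, relative to a.e. convergence. -/
noncomputable def tCoef (C : Set (Lp ℝ 1 μ01)) : ℝ :=
  sInf {l : ℝ | 0 ≤ l ∧ ∀ (xs : ℕ → Lp ℝ 1 μ01) (x : Lp ℝ 1 μ01),
    (∀ n, xs n ∈ C) →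
    (∀ᵐ t ∂μ01, Tendsto (fun n => (xs n : ℝ → ℝ) t) atTop (𝓝 ((x : ℝ → ℝ) t))) →
    sInf ((fun c => limsup (fun n => ‖c - xs n‖) atTop) '' C) ≤
      l * limsup (fun n => ‖x - xs n‖) atTop}

/-!
Since `f_n` vanishes off `[0, 1/n]`, pointwise `|f_n - h| ≥ f_n + h - 2 h χ_{[0,1/n]}`, so
`‖f_n - h‖ ≥ 1 + ∫ h - 2 ∫_{[0,1/n]} h`; the last integral tends to `0` by absolute continuity of
the integral, and every `h ∈ C_a` has `∫ h ≥ a` (a half-space containing `C` and `a·𝟙`). Hence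
`limsup ‖f_n - h‖ ≥ 1 + a`, and testing the definition of `t(C_a)` on `f_{n+1} → 0` gives
`t(C_a) ≥ 1 + a`. The infimum defining `t(C_a)` is over a nonempty set: as `C_a` is bounded,
`λ = 2` is admissible, taking the centres among the terms of the sequence.
-/

section LimsupNorm

variable {E : Type*} [SeminormedAddCommGroup E] {xs : ℕ → E} {R : ℝ}

lemma isBoundedUnder_norm_sub (hR : ∀ n, ‖xs n‖ ≤ R) (c : E) :
    IsBoundedUnder (· ≤ ·) atTop (fun n => ‖c - xs n‖) :=
  isBoundedUnder_of ⟨‖c‖ + R, fun n => (norm_sub_le _ _).trans (by gcongr; exact hR n)⟩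

lemma limsup_norm_sub_nonneg (hR : ∀ n, ‖xs n‖ ≤ R) (c : E) :
    0 ≤ limsup (fun n => ‖c - xs n‖) atTop :=
  le_limsup_of_frequently_le (.of_forall fun _ => norm_nonneg _) (isBoundedUnder_norm_sub hR c)

lemma limsup_norm_sub_le_norm_sub_add (hR : ∀ n, ‖xs n‖ ≤ R) (c x : E) :
    limsup (fun n => ‖c - xs n‖) atTop ≤ ‖c - x‖ + limsup (fun n => ‖x - xs n‖) atTop := by
  rw [← limsup_const_add atTop _ _ (isBoundedUnder_norm_sub hR x)
    (isCoboundedUnder_le_of_le atTop fun _ => norm_nonneg _)]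
  exact limsup_le_limsup (.of_forall fun n => norm_sub_le_norm_sub_add_norm_sub _ _ _)
    (isCoboundedUnder_le_of_le atTop fun _ => norm_nonneg _)
    (isBoundedUnder_le_add isBoundedUnder_const (isBoundedUnder_norm_sub hR x))

/-- Each `xs m` is a candidate centre at asymptotic distance at most `‖xs m - x‖ + r` from the
sequence; then pass to the limsup in `m`. -/
lemma sInf_limsup_norm_sub_le_two_mul {C : Set E} (hC : Bornology.IsBounded C)
    (hxs : ∀ n, xs n ∈ C) (x : E) :
    sInf ((fun c => limsup (fun n => ‖c - xs n‖) atTop) '' C) ≤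
      2 * limsup (fun n => ‖x - xs n‖) atTop := by
  obtain ⟨R, hR⟩ := isBounded_iff_forall_norm_le.1 hC
  have hxsR : ∀ n, ‖xs n‖ ≤ R := fun n => hR _ (hxs n)
  set r := limsup (fun n => ‖x - xs n‖) atTop
  have hbdd : BddBelow ((fun c => limsup (fun n => ‖c - xs n‖) atTop) '' C) :=
    ⟨0, by rintro _ ⟨c, -, rfl⟩; exact limsup_norm_sub_nonneg hxsR c⟩
  have hle : ∀ m, sInf ((fun c => limsup (fun n => ‖c - xs n‖) atTop) '' C) - r ≤ ‖x - xs m‖ :=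
    fun m => by
      have := (csInf_le hbdd ⟨xs m, hxs m, rfl⟩).trans
        (limsup_norm_sub_le_norm_sub_add hxsR (xs m) x)
      rw [norm_sub_rev] at this
      linarith
  have := le_limsup_of_frequently_le (.of_forall hle) (isBoundedUnder_norm_sub hxsR x)
  linarith

end LimsupNorm

lemma le_tCoef {C : Set (Lp ℝ 1 μ01)} (hC : Bornology.IsBounded C) (hne : C.Nonempty)
    {xs : ℕ → Lp ℝ 1 μ01} {x : Lp ℝ 1 μ01} (hxs : ∀ n, xs n ∈ C)
    (hae : ∀ᵐ t ∂μ01, Tendsto (fun n => (xs n : ℝ → ℝ) t) atTop (𝓝 ((x : ℝ → ℝ) t)))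
    (hx : limsup (fun n => ‖x - xs n‖) atTop = 1) {L : ℝ}
    (hL : ∀ c ∈ C, L ≤ limsup (fun n => ‖c - xs n‖) atTop) :
    L ≤ tCoef C := by
  refine le_csInf ⟨2, zero_le_two, fun ys y hys _ => sInf_limsup_norm_sub_le_two_mul hC hys y⟩ ?_
  rintro l ⟨-, hl⟩
  have := hl xs x hxs hae
  rw [hx, mul_one] at this
  exact (le_csInf (hne.image _) (by rintro _ ⟨c, hc, rfl⟩; exact hL c hc)).trans this

section L1

variable {α : Type*} [MeasurableSpace α] {μ : Measure α}

lemma L1.norm_eq_integral_of_nonneg {f : Lp ℝ 1 μ} (hf : ∀ᵐ t ∂μ, 0 ≤ f t) :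
    ‖f‖ = ∫ t, f t ∂μ := by
  rw [L1.norm_eq_integral_norm]
  exact integral_congr_ae (hf.mono fun t ht => Real.norm_of_nonneg ht)

lemma L1.isLinearMap_integral : IsLinearMap ℝ (fun f : Lp ℝ 1 μ => ∫ t, f t ∂μ) := by
  simp_rw [← L1.integral_eq_integral]
  exact ⟨L1.integral_add, L1.integral_smul⟩

/-- Pointwise, `|f - g| ≥ f - g = f + g - 2g` on `s` and `|f - g| = |g| ≥ g = f + g` off `s`. -/
lemma L1.integral_add_integral_sub_two_mul_setIntegral_le_norm_sub {s : Set α}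
    (hs : MeasurableSet s) {f : Lp ℝ 1 μ} (hf : ∀ᵐ t ∂μ, t ∉ s → f t = 0) (g : Lp ℝ 1 μ) :
    ∫ t, f t ∂μ + ∫ t, g t ∂μ - 2 * ∫ t in s, g t ∂μ ≤ ‖f - g‖ := by
  have hfi := L1.integrable_coeFn f
  have hgi := L1.integrable_coeFn g
  have hsum : Integrable (fun t => f t + g t) μ := hfi.add hgi
  have hind : Integrable (fun t => 2 * s.indicator g t) μ := (hgi.indicator hs).const_mul 2
  calc ∫ t, f t ∂μ + ∫ t, g t ∂μ - 2 * ∫ t in s, g t ∂μ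
      = ∫ t, (f t + g t - 2 * s.indicator g t) ∂μ := by
        rw [integral_sub hsum hind, integral_add hfi hgi,
          integral_const_mul, integral_indicator hs]
    _ ≤ ∫ t, ‖(f - g : Lp ℝ 1 μ) t‖ ∂μ := by
        refine integral_mono_ae (hsum.sub hind) (L1.integrable_coeFn _).norm ?_
        filter_upwards [hf, Lp.coeFn_sub f g] with t hft hfg
        rw [hfg, Pi.sub_apply, Real.norm_eq_abs]
        by_cases hts : t ∈ s
        · rw [Set.indicator_of_mem hts]
          linarith [le_abs_self (f t - g t)]
        · rw [Set.indicator_of_notMem hts, hft hts]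
          linarith [neg_abs_le (0 - g t)]
    _ = ‖f - g‖ := (L1.norm_eq_integral_norm _).symm

end L1

lemma μ01_real_Icc_zero_one_div {n : ℕ} (hn : 1 ≤ n) :
    μ01.real (Set.Icc 0 (1 / (n : ℝ))) = 1 / n := by
  rw [μ01, measureReal_restrict_apply measurableSet_Icc, Set.Icc_inter_Icc]
  simp [inv_le_one_of_one_le₀ (Nat.one_le_cast.2 hn : (1 : ℝ) ≤ n), Real.volume_real_Icc]

lemma rect_ae_eq_indicator (n : ℕ) :
    (rect n : ℝ → ℝ) =ᵐ[μ01] (Set.Icc 0 (1 / (n : ℝ))).indicator fun _ => (n : ℝ) :=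
  indicatorConstLp_coeFn

lemma rect_ae_eq_zero_of_notMem (n : ℕ) :
    ∀ᵐ t ∂μ01, t ∉ Set.Icc 0 (1 / (n : ℝ)) → (rect n : ℝ → ℝ) t = 0 := by
  filter_upwards [rect_ae_eq_indicator n] with t ht hts
  rw [ht, Set.indicator_of_notMem hts]

lemma integral_rect {n : ℕ} (hn : 1 ≤ n) : ∫ t, (rect n : ℝ → ℝ) t ∂μ01 = 1 := by
  have hn' : (n : ℝ) ≠ 0 := by positivity
  rw [integral_congr_ae (rect_ae_eq_indicator n), integral_indicator_const _ measurableSet_Icc,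
    μ01_real_Icc_zero_one_div hn, smul_eq_mul]
  field_simp

lemma rect_mem_posProbC (n : ℕ) (hn : 1 ≤ n) : rect n ∈ posProbC := by
  refine ⟨?_, integral_rect hn⟩
  filter_upwards [rect_ae_eq_indicator n] with t ht
  rw [ht]
  exact Set.indicator_nonneg (fun _ _ => n.cast_nonneg) t

lemma norm_of_mem_posProbC {f : Lp ℝ 1 μ01} (hf : f ∈ posProbC) : ‖f‖ = 1 :=
  (L1.norm_eq_integral_of_nonneg hf.1).trans hf.2

lemma isBounded_posProbC : Bornology.IsBounded posProbC :=
  Metric.isBounded_sphere.subset fun _ hf => by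
    rw [mem_sphere_zero_iff_norm, norm_of_mem_posProbC hf]

lemma limsup_norm_rect : limsup (fun n => ‖rect n‖) atTop = 1 := by
  rw [limsup_congr ((eventually_ge_atTop 1).mono fun n hn =>
    norm_of_mem_posProbC (rect_mem_posProbC n hn)), limsup_const]

lemma tendsto_rect_ae :
    ∀ᵐ t ∂μ01, Tendsto (fun n => (rect n : ℝ → ℝ) t) atTop (𝓝 0) := by
  have hne : ∀ᵐ t ∂μ01, t ≠ 0 := ae_restrict_of_ae (volume.ae_ne 0)
  filter_upwards [ae_all_iff.2 rect_ae_eq_zero_of_notMem, hne] with t hrect ht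
  refine tendsto_const_nhds.congr' ?_
  rcases ht.lt_or_gt with ht | ht
  · exact .of_forall fun n => (hrect n fun h => ht.not_ge h.1).symm
  · filter_upwards [tendsto_one_div_atTop_nhds_zero_nat.eventually_lt_const ht] with n hn
    exact (hrect n fun h => hn.not_ge h.2).symm

lemma tendsto_setIntegral_Icc_zero_one_div (h : Lp ℝ 1 μ01) :
    Tendsto (fun n : ℕ => ∫ t in Set.Icc 0 (1 / (n : ℝ)), h t ∂μ01) atTop (𝓝 0) := by
  refine (L1.integrable_coeFn h).tendsto_setIntegral_nhds_zero ?_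
  have hvol : Tendsto (fun n : ℕ => ENNReal.ofReal (1 / n)) atTop (𝓝 0) := by
    simpa using ENNReal.tendsto_ofReal tendsto_one_div_atTop_nhds_zero_nat
  refine tendsto_of_tendsto_of_tendsto_of_le_of_le tendsto_const_nhds hvol (fun _ => zero_le)
    fun n => ?_
  calc μ01 (Set.Icc 0 (1 / (n : ℝ))) ≤ volume (Set.Icc 0 (1 / (n : ℝ))) :=
        Measure.restrict_le_self _
    _ = ENNReal.ofReal (1 / n) := by simp [Real.volume_Icc]

lemma one_add_integral_le_limsup_norm_rect_sub (h : Lp ℝ 1 μ01) :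
    1 + ∫ t, h t ∂μ01 ≤ limsup (fun n => ‖rect n - h‖) atTop := by
  have hlim : Tendsto
      (fun n : ℕ => 1 + ∫ t, h t ∂μ01 - 2 * ∫ t in Set.Icc 0 (1 / (n : ℝ)), h t ∂μ01) atTop
      (𝓝 (1 + ∫ t, h t ∂μ01)) := by
    simpa using tendsto_const_nhds.sub ((tendsto_setIntegral_Icc_zero_one_div h).const_mul 2)
  have hle : ∀ᶠ n : ℕ in atTop,
      1 + ∫ t, h t ∂μ01 - 2 * ∫ t in Set.Icc 0 (1 / (n : ℝ)), h t ∂μ01 ≤ ‖rect n - h‖ := by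
    filter_upwards [eventually_ge_atTop 1] with n hn
    simpa [integral_rect hn] using L1.integral_add_integral_sub_two_mul_setIntegral_le_norm_sub
      measurableSet_Icc (rect_ae_eq_zero_of_notMem n) h
  have hbdd : IsBoundedUnder (· ≤ ·) atTop (fun n => ‖rect n - h‖) :=
    isBoundedUnder_of_eventually_le (a := 1 + ‖h‖) <| (eventually_ge_atTop 1).mono fun n hn =>
      (norm_sub_le _ _).trans (by rw [norm_of_mem_posProbC (rect_mem_posProbC n hn)])
  rw [← hlim.limsup_eq]
  exact limsup_le_limsup hle hlim.isBoundedUnder_ge.isCoboundedUnder_le hbdd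

lemma integral_smul_oneL1 (a : ℝ) : ∫ t, (a • oneL1 : Lp ℝ 1 μ01) t ∂μ01 = a := by
  have hone : (oneL1 : ℝ → ℝ) =ᵐ[μ01] fun _ => 1 := MemLp.coeFn_toLp _
  rw [integral_congr_ae ((Lp.coeFn_smul a oneL1).trans (hone.const_smul a))]
  simp [μ01, Real.volume_real_Icc]

lemma convexHull_subset_setOf_le_integral {a : ℝ} (ha : a ≤ 1) :
    convexHull ℝ (posProbC ∪ {a • oneL1}) ⊆ {f | a ≤ ∫ t, f t ∂μ01} := by
  refine convexHull_min ?_ (convex_halfSpace_ge L1.isLinearMap_integral a)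
  rintro f (hf | rfl)
  · exact ha.trans_eq hf.2.symm
  · exact (integral_smul_oneL1 a).ge

/-- The sequence `f_n = n·χ_{[0,1/n]}` lies in `C`, tends to `0` a.e., has
`limsup ‖f_n - 0‖ = 1`, while `limsup ‖f_n - h‖ ≥ 1 + a` for every `h ∈ C_a`; consequently
`t(C_a) ≥ 1 + a`. -/
theorem tCoef_Ca_ge_one_add (a : ℝ) (ha : a ∈ Set.Icc (0 : ℝ) 1) :
    (∀ n : ℕ, 1 ≤ n → rect n ∈ posProbC) ∧
    (∀ᵐ t ∂μ01, Tendsto (fun n => (rect n : ℝ → ℝ) t) atTop (𝓝 0)) ∧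
    limsup (fun n => ‖rect n - 0‖) atTop = 1 ∧
    (∀ h ∈ convexHull ℝ (posProbC ∪ {a • oneL1}),
      1 + a ≤ limsup (fun n => ‖rect n - h‖) atTop) ∧
    1 + a ≤ tCoef (convexHull ℝ (posProbC ∪ {a • oneL1})) := by
  have hlower : ∀ h ∈ convexHull ℝ (posProbC ∪ {a • oneL1}),
      1 + a ≤ limsup (fun n => ‖rect n - h‖) atTop := fun h hh =>
    (add_le_add_right (convexHull_subset_setOf_le_integral ha.2 hh) 1).trans
      (one_add_integral_le_limsup_norm_rect_sub h)
  refine ⟨rect_mem_posProbC, tendsto_rect_ae, by simpa using limsup_norm_rect, hlower, ?_⟩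
  -- `f_0 = 0` need not lie in `C_a`, so the test sequence is `f_{n+1}`.
  refine le_tCoef (xs := fun n => rect (n + 1)) (x := 0)
    (isBounded_convexHull.2 (isBounded_posProbC.union Bornology.isBounded_singleton))
    ⟨_, subset_convexHull ℝ _ (Or.inr rfl)⟩
    (fun n => subset_convexHull ℝ _ (Or.inl (rect_mem_posProbC _ n.succ_pos))) ?_ ?_
    fun c hc => (hlower c hc).trans_eq <| by
      simp_rw [norm_sub_rev c]
      exact (limsup_nat_add (fun n => ‖rect n - c‖) 1).symm
  · filter_upwards [tendsto_rect_ae, Lp.coeFn_zero ℝ 1 μ01] with t ht h0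
    rw [h0]
    exact ht.comp (tendsto_add_atTop_nat 1)
  · simpa using (limsup_nat_add (fun n => ‖rect n‖) 1).trans limsup_norm_rect
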